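/- arXiv:1501.06465 — 2 statements merged into one kernel-verified Lean document; each statement's English description precedes it below -/
import Mathlib

section
/- For any t > 0 and k ≥ 1, the k-fold iterated integral ∫₀ᵗ g(t,t₁) ∫₀^{t₁} g(t₁,t₂) ⋯ ∫₀^{t_{k−1}} g(t_{k−1},t_k) dt_k ⋯ dt₁ with kernel g(t,s) = 1 + ln t − ln s equals (k+1) tᵏ / k!. -/
open MeasureTheory Real Nat

/-- The `k`-fold iterated integral with kernel `g(t,s) = 1 + log t - log s`. -/
noncomputable def iterInt : ℕ → ℝ → ℝ
  | 0, _ => 1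
  | (k + 1), t => ∫ s in (0:ℝ)..t, (1 + Real.log t - Real.log s) * iterInt k s

/-! The primitive `sᵏ⁺¹ ((c - log s)/(k+1) + 1/(k+1)²)` of `(c - log s) sᵏ` is continuous
at `0` because `s log s → 0`, so each integration step sends `sᵏ` to a multiple of `tᵏ⁺¹`: with
`c = 1 + log t` the multiple is `(k+2)/(k+1)²`, which turns `(k+1)/k!` into `(k+2)/(k+1)!`. -/

lemma hasDerivAt_primitive_sub_log_mul_pow (c : ℝ) (k : ℕ) {s : ℝ} (hs : s ≠ 0) :
    HasDerivAt (fun x => x ^ (k + 1) * ((c - Real.log x) / (k + 1) + 1 / (k + 1) ^ 2))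
      ((c - Real.log s) * s ^ k) s := by
  have hpow : HasDerivAt (fun x : ℝ => x ^ (k + 1)) ((k + 1) * s ^ k) s := by
    simpa using hasDerivAt_pow (k + 1) s
  have hlog := ((hasDerivAt_log hs).const_sub c).div_const ((k : ℝ) + 1) |>.add_const
    (1 / ((k : ℝ) + 1) ^ 2)
  refine (hpow.fun_mul hlog).congr_deriv ?_
  field_simp
  ring

lemma integral_sub_log_mul_pow (c : ℝ) (k : ℕ) {t : ℝ} (ht : 0 ≤ t) :
    ∫ s in (0:ℝ)..t, (c - Real.log s) * s ^ k
      = t ^ (k + 1) * ((c - Real.log t) / (k + 1) + 1 / (k + 1) ^ 2) := by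
  have hcont :
      Continuous fun x : ℝ => x ^ (k + 1) * ((c - Real.log x) / (k + 1) + 1 / (k + 1) ^ 2) := by
    have hsplit : (fun x : ℝ => x ^ (k + 1) * ((c - Real.log x) / (k + 1) + 1 / (k + 1) ^ 2))
        = fun x => x ^ (k + 1) * (c / (k + 1) + 1 / (k + 1) ^ 2)
          - x ^ k * (x * Real.log x) / (k + 1) := by
      funext x
      ring
    rw [hsplit]
    exact ((continuous_pow _).mul continuous_const).sub
      (((continuous_pow k).mul continuous_mul_log).div_const _)
  rw [intervalIntegral.integral_eq_sub_of_hasDerivAt_of_le ht hcont.continuousOn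
    (fun s hs => hasDerivAt_primitive_sub_log_mul_pow c k hs.1.ne')
    ((intervalIntegrable_const.sub intervalIntegral.intervalIntegrable_log').mul_continuousOn
      (continuous_pow k).continuousOn)]
  simp

lemma iterInt_eq (k : ℕ) {t : ℝ} (ht : 0 ≤ t) :
    iterInt k t = (k + 1) * t ^ k / (k ! : ℝ) := by
  induction k generalizing t with
  | zero => simp [iterInt]
  | succ k ih =>
    have hstep : ∫ s in (0:ℝ)..t, (1 + Real.log t - Real.log s) * iterInt k s
        = (k + 1) / (k ! : ℝ) * ∫ s in (0:ℝ)..t, (1 + Real.log t - Real.log s) * s ^ k := by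
      rw [← intervalIntegral.integral_const_mul]
      refine intervalIntegral.integral_congr fun s hs => ?_
      rw [Set.uIcc_of_le ht] at hs
      simp only [ih hs.1]
      ring
    rw [iterInt, hstep, integral_sub_log_mul_pow _ k ht, factorial_succ]
    push_cast
    field_simp
    ring

theorem stmt_1_general (t : ℝ) (ht : 0 < t) (k : ℕ) :
    iterInt k t = (k + 1) * t ^ k / (k ! : ℝ) :=
  iterInt_eq k ht.le

/-- For `t > 0` and `k ≥ 1`, the `k`-fold iterated integral
`∫₀ᵗ g(t,t₁) ∫₀^{t₁} g(t₁,t₂) ⋯ ∫₀^{t_{k-1}} g(t_{k-1},t_k) dt_k ⋯ dt₁`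
with `g(t,s) = 1 + log t − log s` equals `(k+1) tᵏ / k!`. -/
theorem stmt_1 (t : ℝ) (ht : 0 < t) (k : ℕ) (hk : 1 ≤ k) :
    iterInt k t = (k + 1) * t ^ k / (k ! : ℝ) :=
  stmt_1_general t ht k
end

section
/- Let E be a continuous nonnegative function on [0,T] satisfying E(t) ≤ L ∫₀ᵗ (1 + ln t − ln s) E(s) ds for all t ∈ (0,T], where L ≥ 0 and the integral is finite. Then E ≡ 0 on [0,T]. -/
/-!
The kernel `1 + log t - log s` is nonnegative for `0 < s ≤ t`, and its integral over `[a, t]`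
is at most `2 (t - a)` for every `0 ≤ a ≤ t`. Hence if `E` vanishes on `(0, a]`, the inequality
gives `max_{[a, b]} E ≤ 2 L (b - a) max_{[a, b]} E`, so `E` vanishes on `[a, b]` once
`2 L (b - a) < 1` (the endpoint `a = 0` is reached by continuity). Steps of the fixed length
`1 / (2 L + 1)` cover `[0, T]` after finitely many steps.
-/

open MeasureTheory Real Set

section LogKernel

variable {a t : ℝ}

lemma hasDerivAt_logKernel_primitive (t : ℝ) {x : ℝ} (hx : x ≠ 0) :
    HasDerivAt (fun s => 2 * s + s * log t - s * log s) (1 + log t - log x) x := by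
  have h := (((hasDerivAt_id' x).const_mul 2).add ((hasDerivAt_id' x).mul_const (log t))).sub
    (hasDerivAt_mul_log hx)
  exact h.congr_deriv (by ring)

lemma logKernel_nonneg {s : ℝ} (hs : 0 < s) (hst : s ≤ t) : 0 ≤ 1 + log t - log s := by
  linarith [log_le_log hs hst]

lemma intervalIntegrable_logKernel (ha : 0 ≤ a) (hat : a ≤ t) :
    IntervalIntegrable (fun s => 1 + log t - log s) volume a t := by
  refine intervalIntegral.intervalIntegrable_deriv_of_nonneg
    (g := fun s => 2 * s + s * log t - s * log s) (by fun_prop) ?_ ?_ <;>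
    rw [min_eq_left hat, max_eq_right hat] <;> intro x hx
  · exact hasDerivAt_logKernel_primitive t (ha.trans_lt hx.1).ne'
  · exact logKernel_nonneg (ha.trans_lt hx.1) hx.2.le

/-- The exact value is `2 (t - a) - a log (t / a)`. -/
lemma integral_logKernel_le (ha : 0 ≤ a) (hat : a ≤ t) :
    ∫ s in a..t, (1 + log t - log s) ≤ 2 * (t - a) := by
  rw [intervalIntegral.integral_eq_sub_of_hasDeriv_right_of_le hat (by fun_prop)
    (fun x hx => (hasDerivAt_logKernel_primitive t (ha.trans_lt hx.1).ne').hasDerivWithinAt)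
    (intervalIntegrable_logKernel ha hat)]
  rcases ha.eq_or_lt with rfl | ha
  · simp
  · nlinarith [log_le_log ha hat]

end LogKernel

section LogGronwall

variable {T L a b t M : ℝ} {E : ℝ → ℝ}

lemma le_of_logGronwall (hL : 0 ≤ L)
    (hint : ∀ t ∈ Ioc (0:ℝ) T,
      IntervalIntegrable (fun s => (1 + log t - log s) * E s) volume 0 t)
    (hineq : ∀ t ∈ Ioc (0:ℝ) T, E t ≤ L * ∫ s in (0:ℝ)..t, (1 + log t - log s) * E s)
    (ha : 0 ≤ a) (hat : a < t) (htT : t ≤ T) (hzero : ∀ s ∈ Ioc 0 a, E s = 0)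
    (hM : ∀ s ∈ Ioc a t, E s ≤ M) (hM₀ : 0 ≤ M) :
    E t ≤ 2 * L * (t - a) * M := by
  have ht : 0 < t := ha.trans_lt hat
  have hkE := hint t ⟨ht, htT⟩
  have hkE_a : IntervalIntegrable (fun s => (1 + log t - log s) * E s) volume a t :=
    hkE.mono_set (by rw [uIcc_of_le hat.le, uIcc_of_le ht.le]; exact Icc_subset_Icc ha le_rfl)
  have hinitial : ∫ s in (0:ℝ)..a, (1 + log t - log s) * E s = 0 := by
    rw [intervalIntegral.integral_of_le ha]
    exact setIntegral_eq_zero_of_forall_eq_zero fun s hs => by simp [hzero s hs]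
  have hcompare :
      ∫ s in a..t, (1 + log t - log s) * E s ≤ ∫ s in a..t, (1 + log t - log s) * M := by
    rw [intervalIntegral.integral_of_le hat.le, intervalIntegral.integral_of_le hat.le]
    refine setIntegral_mono_on hkE_a.1 ((intervalIntegrable_logKernel ha hat.le).mul_const M).1
      measurableSet_Ioc fun s hs => ?_
    exact mul_le_mul_of_nonneg_left (hM s hs)
      (logKernel_nonneg (ha.trans_lt hs.1) hs.2)
  calc E t ≤ L * ∫ s in (0:ℝ)..t, (1 + log t - log s) * E s := hineq t ⟨ht, htT⟩
    _ = L * ∫ s in a..t, (1 + log t - log s) * E s := by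
      rw [← intervalIntegral.integral_add_adjacent_intervals
        (hkE.mono_set (by rw [uIcc_of_le ha, uIcc_of_le ht.le]; exact Icc_subset_Icc le_rfl hat.le))
        hkE_a, hinitial, zero_add]
    _ ≤ L * ((∫ s in a..t, (1 + log t - log s)) * M) := by
      rw [← intervalIntegral.integral_mul_const]; exact mul_le_mul_of_nonneg_left hcompare hL
    _ ≤ L * (2 * (t - a) * M) := by
      gcongr; exact integral_logKernel_le ha hat.le
    _ = 2 * L * (t - a) * M := by ring

lemma eqOn_zero_of_logGronwall (hL : 0 ≤ L) (hEcont : ContinuousOn E (Icc 0 T))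
    (hEnonneg : ∀ t ∈ Icc (0:ℝ) T, 0 ≤ E t)
    (hint : ∀ t ∈ Ioc (0:ℝ) T,
      IntervalIntegrable (fun s => (1 + log t - log s) * E s) volume 0 t)
    (hineq : ∀ t ∈ Ioc (0:ℝ) T, E t ≤ L * ∫ s in (0:ℝ)..t, (1 + log t - log s) * E s)
    (ha : 0 ≤ a) (hab : a < b) (hbT : b ≤ T) (hsmall : 2 * L * (b - a) < 1)
    (hzero : ∀ s ∈ Ioc 0 a, E s = 0) :
    ∀ t ∈ Icc a b, E t = 0 := by
  have hsub : Icc a b ⊆ Icc 0 T := Icc_subset_Icc ha hbT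
  obtain ⟨t₀, ht₀, hmax⟩ :=
    isCompact_Icc.exists_isMaxOn (nonempty_Icc.2 hab.le) (hEcont.mono hsub)
  have hM₀ : 0 ≤ E t₀ := hEnonneg t₀ (hsub ht₀)
  have hbound : ∀ t ∈ Ioc a b, E t ≤ 2 * L * (b - a) * E t₀ := fun t ht => calc
    E t ≤ 2 * L * (t - a) * E t₀ := le_of_logGronwall hL hint hineq ha ht.1 (ht.2.trans hbT)
        hzero (fun s hs => hmax ⟨hs.1.le, hs.2.trans ht.2⟩) hM₀
    _ ≤ 2 * L * (b - a) * E t₀ := by gcongr; exact ht.2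
  have hself : E t₀ ≤ 2 * L * (b - a) * E t₀ :=
    ContinuousWithinAt.closure_le (by rwa [closure_Ioc hab.ne])
      ((hEcont t₀ (hsub ht₀)).mono (Ioc_subset_Icc_self.trans hsub)) continuousWithinAt_const
      hbound
  have hM : E t₀ = 0 := by nlinarith
  exact fun t ht => le_antisymm (hM ▸ hmax ht) (hEnonneg t (hsub ht))

end LogGronwall

/-- Gronwall-type lemma with logarithmic kernel: if `E` is continuous, nonnegative on `[0,T]`
and `E t ≤ L ∫₀ᵗ (1 + log t - log s) E s ds` on `(0,T]`, then `E ≡ 0` on `[0,T]`. -/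
theorem stmt_3 (T L : ℝ) (hT : 0 < T) (hL : 0 ≤ L)
    (E : ℝ → ℝ)
    (hEcont : ContinuousOn E (Set.Icc 0 T))
    (hEnonneg : ∀ t ∈ Set.Icc (0:ℝ) T, 0 ≤ E t)
    (hint : ∀ t ∈ Set.Ioc (0:ℝ) T,
      IntervalIntegrable (fun s => (1 + Real.log t - Real.log s) * E s) volume 0 t)
    (hineq : ∀ t ∈ Set.Ioc (0:ℝ) T,
      E t ≤ L * ∫ s in (0:ℝ)..t, (1 + Real.log t - Real.log s) * E s) :
    ∀ t ∈ Set.Icc (0:ℝ) T, E t = 0 := by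
  set δ := 1 / (2 * L + 1)
  have hδ : 0 < δ := by positivity
  have hsmall : ∀ x ≤ δ, 2 * L * x < 1 := fun x hx => calc
    2 * L * x ≤ 2 * L * δ := by gcongr
    _ < 1 := by rw [mul_one_div, div_lt_one (by linarith)]; linarith
  have step {a b : ℝ} := eqOn_zero_of_logGronwall (a := a) (b := b) hL hEcont hEnonneg hint hineq
  have hvanish : ∀ n : ℕ, ∀ t ∈ Icc 0 T, t ≤ n * δ → E t = 0 := by
    intro n
    induction n with
    | zero =>
      intro t ht ht0
      obtain rfl : t = 0 := le_antisymm (by simpa using ht0) ht.1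
      exact step le_rfl (lt_min hδ hT) (min_le_right _ _)
        (by simpa using hsmall _ (min_le_left _ _)) (by simp) 0 ⟨le_rfl, (lt_min hδ hT).le⟩
    | succ n ih =>
      intro t ht htn
      rcases le_or_gt t (n * δ) with h | h
      · exact ih t ht h
      · exact step (by positivity) h ht.2 (hsmall _ (by push_cast at htn; linarith))
          (fun s hs => ih s ⟨hs.1.le, hs.2.trans (h.le.trans ht.2)⟩ hs.2) t ⟨h.le, le_rfl⟩
  obtain ⟨n, hn⟩ := exists_nat_ge (T / δ)
  exact fun t ht => hvanish n t ht (by rw [div_le_iff₀ hδ] at hn; linarith [ht.2])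
end
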